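/- arXiv:1309.6798 — 2 statements merged into one kernel-verified Lean document; each statement's English description precedes it below -/
import Mathlib

section
/- Let f : [a,b] ⊆ [0,∞) → [0,∞) be continuous, 0 ≤ a < b, and let f be s-convex in the second sense for some s ∈ (0,1]. Then for fixed p, q > 0: ∫_a^b (x-a)^p (b-x)^q f(x) f(a+b-x) dx ≤ ((b-a)^{p+q+1}/2) { (f(a)^2 + f(b)^2)[B(p+1, 2s+q+1) + B(q+1, 2s+p+1)] + 4 f(a) f(b) B(p+s+1, q+s+1) }, where B is the Euler Beta function. -/
/-!
Substitute x = (1 - t) a + t b, so that a + b - x = t a + (1 - t) b. Second-sense s-convexity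
bounds f(x) f(a + b - x) by ((1 - t)^s f(a) + t^s f(b)) (t^s f(a) + (1 - t)^s f(b)), and this
product is at most half of (f(a)² + f(b)²)((1 - t)^{2s} + t^{2s}) + 4 f(a) f(b) t^s (1 - t)^s.
Multiplied by the weight (b - a)^{p+q} t^p (1 - t)^q, each monomial integrates to a Beta value.
-/

open MeasureTheory Set

noncomputable def eulerBeta (m n : ℝ) : ℝ := ∫ t in (0:ℝ)..1, t ^ (m - 1) * (1 - t) ^ (n - 1)

open intervalIntegral Real

lemma eulerBeta_comm (m n : ℝ) : eulerBeta m n = eulerBeta n m := by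
  simpa [eulerBeta, mul_comm] using
    (integral_comp_sub_left (fun t : ℝ => t ^ (m - 1) * (1 - t) ^ (n - 1)) (a := 0) (b := 1) 1).symm

lemma integral_rpow_mul_one_sub_rpow (m n : ℝ) :
    ∫ t in (0:ℝ)..1, t ^ m * (1 - t) ^ n = eulerBeta (m + 1) (n + 1) := by
  simp [eulerBeta]

lemma intervalIntegrable_rpow_mul_one_sub_rpow {m n : ℝ} (hm : 0 ≤ m) (hn : 0 ≤ n) :
    IntervalIntegrable (fun t : ℝ => t ^ m * (1 - t) ^ n) volume 0 1 := by
  have := continuous_rpow_const hm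
  have := continuous_rpow_const hn
  exact Continuous.intervalIntegrable (by fun_prop) 0 1

noncomputable def reflectProductBound (s x y t : ℝ) : ℝ :=
  ((x ^ 2 + y ^ 2) * ((1 - t) ^ (2 * s) + t ^ (2 * s)) + 4 * x * y * (t ^ s * (1 - t) ^ s)) / 2

lemma integral_rpow_mul_one_sub_rpow_mul_reflectProductBound {p q s : ℝ} (hp : 0 ≤ p)
    (hq : 0 ≤ q) (hs : 0 ≤ s) (x y : ℝ) :
    ∫ t in (0:ℝ)..1, t ^ p * (1 - t) ^ q * reflectProductBound s x y t =
      ((x ^ 2 + y ^ 2) * (eulerBeta (p + 1) (2 * s + q + 1) + eulerBeta (q + 1) (2 * s + p + 1)) +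
        4 * x * y * eulerBeta (p + s + 1) (q + s + 1)) / 2 := by
  have h2s : 0 ≤ 2 * s := by positivity
  have hexpand : ∀ t ∈ uIcc (0:ℝ) 1, t ^ p * (1 - t) ^ q * reflectProductBound s x y t =
      (x ^ 2 + y ^ 2) / 2 * (t ^ p * (1 - t) ^ (2 * s + q)) +
        (x ^ 2 + y ^ 2) / 2 * (t ^ (2 * s + p) * (1 - t) ^ q) +
          2 * x * y * (t ^ (p + s) * (1 - t) ^ (q + s)) := by
    intro t ht
    rw [uIcc_of_le zero_le_one] at ht
    have h1t : 0 ≤ 1 - t := sub_nonneg.2 ht.2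
    rw [reflectProductBound, rpow_add_of_nonneg h1t h2s hq, rpow_add_of_nonneg ht.1 h2s hp,
      rpow_add_of_nonneg ht.1 hp hs, rpow_add_of_nonneg h1t hq hs]
    ring
  have hi₁ := intervalIntegrable_rpow_mul_one_sub_rpow hp (add_nonneg h2s hq)
  have hi₂ := intervalIntegrable_rpow_mul_one_sub_rpow (add_nonneg h2s hp) hq
  have hi₃ := intervalIntegrable_rpow_mul_one_sub_rpow (add_nonneg hp hs) (add_nonneg hq hs)
  rw [integral_congr hexpand,
    integral_add ((hi₁.const_mul _).add (hi₂.const_mul _)) (hi₃.const_mul _),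
    integral_add (hi₁.const_mul _) (hi₂.const_mul _)]
  simp only [intervalIntegral.integral_const_mul, integral_rpow_mul_one_sub_rpow]
  rw [eulerBeta_comm (2 * s + p + 1)]
  ring

lemma integral_sub_rpow_mul_sub_rpow_mul {a b : ℝ} (hab : a < b) (p q : ℝ) (g : ℝ → ℝ) :
    ∫ x in a..b, (x - a) ^ p * (b - x) ^ q * g x =
      (b - a) ^ (p + q + 1) * ∫ t in (0:ℝ)..1, t ^ p * (1 - t) ^ q * g ((1 - t) * a + t * b) := by
  have hba : 0 < b - a := sub_pos.2 hab
  have hsub := integral_comp_add_mul (a := 0) (b := 1)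
    (fun x => (x - a) ^ p * (b - x) ^ q * g x) hba.ne' a
  simp only [mul_zero, add_zero, mul_one, add_sub_cancel, smul_eq_mul] at hsub
  have hcongr : ∀ t ∈ uIcc (0:ℝ) 1, (a + (b - a) * t - a) ^ p * (b - (a + (b - a) * t)) ^ q *
      g (a + (b - a) * t) = (b - a) ^ (p + q) * (t ^ p * (1 - t) ^ q * g ((1 - t) * a + t * b)) := by
    intro t ht
    rw [uIcc_of_le zero_le_one] at ht
    rw [show a + (b - a) * t - a = (b - a) * t by ring,
      show b - (a + (b - a) * t) = (b - a) * (1 - t) by ring,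
      show a + (b - a) * t = (1 - t) * a + t * b by ring, mul_rpow hba.le ht.1,
      mul_rpow hba.le (sub_nonneg.2 ht.2), rpow_add hba]
    ring
  rw [integral_congr hcongr, intervalIntegral.integral_const_mul] at hsub
  rw [rpow_add_one hba.ne', mul_right_comm, hsub]
  field_simp

def SConvexSecondSense (s : ℝ) (f : ℝ → ℝ) : Prop :=
  ∀ u v : ℝ, 0 ≤ u → 0 ≤ v → ∀ α β : ℝ, 0 ≤ α → 0 ≤ β → α + β = 1 →
    f (α * u + β * v) ≤ α ^ s * f u + β ^ s * f v

lemma mul_add_mul_mul_mul_add_mul_le (x y u v : ℝ) :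
    (u * x + v * y) * (v * x + u * y) ≤ ((x ^ 2 + y ^ 2) * (u ^ 2 + v ^ 2) + 4 * x * y * (u * v)) / 2 := by
  -- the gap is ((u - v) (x - y))² / 2
  nlinarith [sq_nonneg ((u - v) * (x - y))]

lemma SConvexSecondSense.mul_comp_reflect_le {s : ℝ} {f : ℝ → ℝ} (hf : SConvexSecondSense s f)
    {a b t : ℝ} (ha : 0 ≤ a) (hb : 0 ≤ b) (ht0 : 0 ≤ t) (ht1 : t ≤ 1)
    (hx : 0 ≤ f ((1 - t) * a + t * b)) (hy : 0 ≤ f (t * a + (1 - t) * b)) :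
    f ((1 - t) * a + t * b) * f (t * a + (1 - t) * b) ≤ reflectProductBound s (f a) (f b) t := by
  have h1t : 0 ≤ 1 - t := sub_nonneg.2 ht1
  have hfx := hf a b ha hb (1 - t) t h1t ht0 (by ring)
  have hfy := hf a b ha hb t (1 - t) ht0 h1t (by ring)
  calc f ((1 - t) * a + t * b) * f (t * a + (1 - t) * b)
      ≤ ((1 - t) ^ s * f a + t ^ s * f b) * (t ^ s * f a + (1 - t) ^ s * f b) :=
        mul_le_mul hfx hfy hy (hx.trans hfx)
    _ ≤ _ := by
        rw [reflectProductBound, mul_comm 2 s, rpow_mul h1t, rpow_mul ht0, rpow_two, rpow_two]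
        linarith [mul_add_mul_mul_mul_add_mul_le (f a) (f b) ((1 - t) ^ s) (t ^ s)]

lemma SConvexSecondSense.integral_weighted_mul_reflect_le {s : ℝ} {f : ℝ → ℝ}
    (hsc : SConvexSecondSense s f) {a b : ℝ} (ha : 0 ≤ a) (hab : a ≤ b)
    (hf : ContinuousOn f (Icc a b)) (hnn : ∀ x ∈ Icc a b, 0 ≤ f x) (hs : 0 ≤ s)
    {p q : ℝ} (hp : 0 ≤ p) (hq : 0 ≤ q) :
    ∫ t in (0:ℝ)..1, t ^ p * (1 - t) ^ q * (f ((1 - t) * a + t * b) *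
        f (a + b - ((1 - t) * a + t * b))) ≤
      ((f a ^ 2 + f b ^ 2) * (eulerBeta (p + 1) (2 * s + q + 1) + eulerBeta (q + 1) (2 * s + p + 1)) +
        4 * f a * f b * eulerBeta (p + s + 1) (q + s + 1)) / 2 := by
  have hmaps : MapsTo (fun t => (1 - t) * a + t * b) (Icc 0 1) (Icc a b) := fun t ht =>
    ⟨by nlinarith [ht.1], by nlinarith [ht.2]⟩
  have hmaps' : MapsTo (fun t => t * a + (1 - t) * b) (Icc 0 1) (Icc a b) := fun t ht =>
    ⟨by nlinarith [ht.2], by nlinarith [ht.1]⟩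
  have hreflect : ∀ t, a + b - ((1 - t) * a + t * b) = t * a + (1 - t) * b := fun t => by ring
  have hweight : Continuous fun t : ℝ => t ^ p * (1 - t) ^ q := by
    have := continuous_rpow_const hp
    have := continuous_rpow_const hq
    fun_prop
  have hlhs : IntervalIntegrable (fun t => t ^ p * (1 - t) ^ q * (f ((1 - t) * a + t * b) *
      f (a + b - ((1 - t) * a + t * b)))) volume 0 1 := by
    simp only [hreflect]
    exact (hweight.continuousOn.mul ((hf.comp (by fun_prop) hmaps).mul
      (hf.comp (by fun_prop) hmaps'))).intervalIntegrable_of_Icc zero_le_one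
  have hrhs : IntervalIntegrable (fun t => t ^ p * (1 - t) ^ q *
      reflectProductBound s (f a) (f b) t) volume 0 1 := by
    unfold reflectProductBound
    have := continuous_rpow_const hs
    have := continuous_rpow_const (mul_nonneg zero_le_two hs)
    exact Continuous.intervalIntegrable (by fun_prop) 0 1
  rw [← integral_rpow_mul_one_sub_rpow_mul_reflectProductBound hp hq hs]
  refine integral_mono_on zero_le_one hlhs hrhs fun t ht => ?_
  rw [hreflect]
  gcongr
  · exact mul_nonneg (rpow_nonneg ht.1 p) (rpow_nonneg (sub_nonneg.2 ht.2) q)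
  · exact hsc.mul_comp_reflect_le ha (ha.trans hab) ht.1 ht.2 (hnn _ (hmaps ht)) (hnn _ (hmaps' ht))

theorem thm_2_1_general (f : ℝ → ℝ) (a b : ℝ) (ha : 0 ≤ a) (hab : a < b)
    (hf : ContinuousOn f (Icc a b)) (hnn : ∀ x ∈ Icc a b, 0 ≤ f x) (s : ℝ) (hs0 : 0 < s)
    (hsc : ∀ u v : ℝ, 0 ≤ u → 0 ≤ v → ∀ α β : ℝ, 0 ≤ α → 0 ≤ β → α + β = 1 →
      f (α * u + β * v) ≤ α ^ s * f u + β ^ s * f v)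
    (p q : ℝ) (hp : 0 < p) (hq : 0 < q) :
    ∫ x in a..b, (x - a) ^ p * (b - x) ^ q * (f x * f (a + b - x)) ≤
      (b - a) ^ (p + q + 1) / 2 *
        ((f a ^ 2 + f b ^ 2) * (eulerBeta (p + 1) (2 * s + q + 1) + eulerBeta (q + 1) (2 * s + p + 1)) +
          4 * f a * f b * eulerBeta (p + s + 1) (q + s + 1)) := by
  have hbound := SConvexSecondSense.integral_weighted_mul_reflect_le hsc ha hab.le hf hnn hs0.le
    hp.le hq.le
  rw [integral_sub_rpow_mul_sub_rpow_mul hab, mul_comm_div]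
  exact mul_le_mul_of_nonneg_left hbound (rpow_nonneg (sub_nonneg.2 hab.le) _)

theorem thm_2_1 (f : ℝ → ℝ) (a b : ℝ) (ha : 0 ≤ a) (hab : a < b)
    (hf : ContinuousOn f (Icc a b)) (hnn : ∀ x ∈ Icc a b, 0 ≤ f x) (s : ℝ) (hs0 : 0 < s) (hs1 : s ≤ 1)
    (hsc : ∀ u v : ℝ, 0 ≤ u → 0 ≤ v → ∀ α β : ℝ, 0 ≤ α → 0 ≤ β → α + β = 1 →
      f (α * u + β * v) ≤ α ^ s * f u + β ^ s * f v)
    (p q : ℝ) (hp : 0 < p) (hq : 0 < q) :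
    ∫ x in a..b, (x - a) ^ p * (b - x) ^ q * (f x * f (a + b - x)) ≤
      (b - a) ^ (p + q + 1) / 2 *
        ((f a ^ 2 + f b ^ 2) * (eulerBeta (p + 1) (2 * s + q + 1) + eulerBeta (q + 1) (2 * s + p + 1)) +
          4 * f a * f b * eulerBeta (p + s + 1) (q + s + 1)) :=
  thm_2_1_general f a b ha hab hf hnn s hs0 hsc p q hp hq
end

section
/- Let f : [a,b] ⊆ [0,∞) → [0,∞) be continuous and quasi-convex, 0 ≤ a < b, and p, q > 0. Then ∫_a^b (x-a)^p (b-x)^q f(x) f(a+b-x) dx ≤ (b-a)^{p+q+1} (max{f(a), f(b)})^2 B(p+1, q+1), where B is the Euler Beta function. -/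
open MeasureTheory Set

/-!
Quasi-convexity bounds `f` on `[a, b]` by `M = max (f a) (f b)`, so the integrand is at most
`(x - a) ^ p * (b - x) ^ q * M ^ 2`, and the substitution `x = a + (b - a) t` turns the integral
of this weight into `(b - a) ^ (p + q + 1) * B(p + 1, q + 1)`.
-/

theorem quasiconvexOn_of_le_max {𝕜 E β : Type*} [Ring 𝕜] [PartialOrder 𝕜] [IsOrderedAddMonoid 𝕜]
    [AddCommMonoid E] [Module 𝕜 E] [LinearOrder β] {s : Set E} {f : E → β} (hs : Convex 𝕜 s)
    (h : ∀ x ∈ s, ∀ y ∈ s, ∀ α : 𝕜, 0 ≤ α → α ≤ 1 →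
      f (α • x + (1 - α) • y) ≤ max (f x) (f y)) :
    QuasiconvexOn 𝕜 s f := by
  refine quasiconvexOn_iff_le_max.2 ⟨hs, fun x hx y hy α β hα hβ hαβ => ?_⟩
  obtain rfl : β = 1 - α := by rw [← hαβ, add_sub_cancel_left]
  exact h x hx y hy α hα (sub_nonneg.1 hβ)

theorem QuasiconvexOn.le_max_of_mem_segment {𝕜 E β : Type*} [Semiring 𝕜] [PartialOrder 𝕜]
    [AddCommMonoid E] [SMul 𝕜 E] [LinearOrder β] {s : Set E} {f : E → β}
    (hf : QuasiconvexOn 𝕜 s f) {x y z : E} (hx : x ∈ s) (hy : y ∈ s) (hz : z ∈ segment 𝕜 x y) :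
    f z ≤ max (f x) (f y) :=
  ((hf _).segment_subset ⟨hx, le_max_left _ _⟩ ⟨hy, le_max_right _ _⟩ hz).2

section BetaWeight

variable {a b p q : ℝ}

theorem continuous_sub_rpow_mul_sub_rpow (hp : 0 ≤ p) (hq : 0 ≤ q) :
    Continuous fun x : ℝ => (x - a) ^ p * (b - x) ^ q :=
  ((Real.continuous_rpow_const hp).comp (continuous_sub_right a)).mul
    ((Real.continuous_rpow_const hq).comp (continuous_sub_left b))

theorem integral_sub_rpow_mul_sub_rpow (hab : a < b) :
    ∫ x in a..b, (x - a) ^ p * (b - x) ^ q =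
      (b - a) ^ (p + q + 1) * eulerBeta (p + 1) (q + 1) := by
  have hba : 0 < b - a := sub_pos.2 hab
  have hsubst : ∫ t in (0:ℝ)..1, ((b - a) * t + a - a) ^ p * (b - ((b - a) * t + a)) ^ q =
      (b - a) ^ p * (b - a) ^ q * eulerBeta (p + 1) (q + 1) := by
    rw [eulerBeta, ← intervalIntegral.integral_const_mul]
    refine intervalIntegral.integral_congr fun t ht => ?_
    rw [uIcc_of_le zero_le_one] at ht
    have hx : (b - a) * t + a - a = (b - a) * t := by ring
    have hy : b - ((b - a) * t + a) = (b - a) * (1 - t) := by ring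
    simp only [hx, hy, add_sub_cancel_right, Real.mul_rpow hba.le ht.1,
      Real.mul_rpow hba.le (sub_nonneg.2 ht.2)]
    ring
  rw [intervalIntegral.integral_comp_mul_add (fun x => (x - a) ^ p * (b - x) ^ q) hba.ne' a]
    at hsubst
  simp only [mul_zero, zero_add, mul_one, sub_add_cancel, smul_eq_mul] at hsubst
  rw [(inv_mul_eq_iff_eq_mul₀ hba.ne').1 hsubst, Real.rpow_add hba, Real.rpow_add hba,
    Real.rpow_one]
  ring

theorem integral_sub_rpow_mul_sub_rpow_mul_le {g : ℝ → ℝ} {M : ℝ} (hab : a ≤ b) (hp : 0 ≤ p)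
    (hq : 0 ≤ q) (hg : ContinuousOn g (Icc a b)) (hgM : ∀ x ∈ Icc a b, g x ≤ M) :
    ∫ x in a..b, (x - a) ^ p * (b - x) ^ q * g x ≤
      (∫ x in a..b, (x - a) ^ p * (b - x) ^ q) * M := by
  have hw := continuous_sub_rpow_mul_sub_rpow (a := a) (b := b) hp hq
  rw [← intervalIntegral.integral_mul_const]
  refine intervalIntegral.integral_mono_on hab ?_ ((hw.mul continuous_const).intervalIntegrable _ _)
    fun x hx => mul_le_mul_of_nonneg_left (hgM x hx)
      (mul_nonneg (Real.rpow_nonneg (sub_nonneg.2 hx.1) p) (Real.rpow_nonneg (sub_nonneg.2 hx.2) q))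
  exact (hw.continuousOn.mul hg).intervalIntegrable_of_Icc hab

end BetaWeight

theorem thm_2_2_general (f : ℝ → ℝ) (a b : ℝ) (hab : a < b)
    (hf : ContinuousOn f (Icc a b)) (hnn : ∀ x ∈ Icc a b, 0 ≤ f x)
    (hq : ∀ x ∈ Icc a b, ∀ y ∈ Icc a b, ∀ α : ℝ, 0 ≤ α → α ≤ 1 →
      f (α * x + (1 - α) * y) ≤ max (f x) (f y))
    (p q : ℝ) (hp : 0 < p) (hq' : 0 < q) :
    ∫ x in a..b, (x - a) ^ p * (b - x) ^ q * (f x * f (a + b - x)) ≤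
      (b - a) ^ (p + q + 1) * (max (f a) (f b)) ^ 2 * eulerBeta (p + 1) (q + 1) := by
  have hqc : QuasiconvexOn ℝ (Icc a b) f := quasiconvexOn_of_le_max (convex_Icc a b) hq
  have hfM : ∀ x ∈ Icc a b, f x ≤ max (f a) (f b) := fun x hx =>
    hqc.le_max_of_mem_segment (left_mem_Icc.2 hab.le) (right_mem_Icc.2 hab.le)
      (by rwa [segment_eq_Icc hab.le])
  have hrefl : MapsTo (fun x => a + b - x) (Icc a b) (Icc a b) := fun x hx =>
    ⟨by linarith [hx.2], by linarith [hx.1]⟩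
  have hprod : ∀ x ∈ Icc a b, f x * f (a + b - x) ≤ max (f a) (f b) ^ 2 := fun x hx => by
    rw [sq]
    exact mul_le_mul (hfM x hx) (hfM _ (hrefl hx)) (hnn _ (hrefl hx)) ((hnn x hx).trans (hfM x hx))
  calc ∫ x in a..b, (x - a) ^ p * (b - x) ^ q * (f x * f (a + b - x))
      ≤ (∫ x in a..b, (x - a) ^ p * (b - x) ^ q) * max (f a) (f b) ^ 2 :=
        integral_sub_rpow_mul_sub_rpow_mul_le hab.le hp.le hq'.le
          (hf.mul (hf.comp (continuous_sub_left _).continuousOn hrefl)) hprod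
    _ = (b - a) ^ (p + q + 1) * max (f a) (f b) ^ 2 * eulerBeta (p + 1) (q + 1) := by
        rw [integral_sub_rpow_mul_sub_rpow hab]; ring

theorem thm_2_2 (f : ℝ → ℝ) (a b : ℝ) (ha : 0 ≤ a) (hab : a < b)
    (hf : ContinuousOn f (Icc a b)) (hnn : ∀ x ∈ Icc a b, 0 ≤ f x)
    (hq : ∀ x ∈ Icc a b, ∀ y ∈ Icc a b, ∀ α : ℝ, 0 ≤ α → α ≤ 1 →
      f (α * x + (1 - α) * y) ≤ max (f x) (f y))
    (p q : ℝ) (hp : 0 < p) (hq' : 0 < q) :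
    ∫ x in a..b, (x - a) ^ p * (b - x) ^ q * (f x * f (a + b - x)) ≤
      (b - a) ^ (p + q + 1) * (max (f a) (f b)) ^ 2 * eulerBeta (p + 1) (q + 1) :=
  thm_2_2_general f a b hab hf hnn hq p q hp hq'
end
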